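/- arXiv:1811.01182 — 3 statements merged into one kernel-verified Lean document; each statement's English description precedes it below -/
import Mathlib

section
/- (Lemma 4, gradient variance bounds for SPD1-VR) In the t-th inner iteration of SPD1-VR at outer stage k, define ∇^t_{x,j_t} = a_{i'_t j_t}(y^t_{i'_t} − ỹ^k_{i'_t}) + G^k_{x,j_t} and ∇'^t_{x,j_t} = a_{i_t j_t}(ȳ^t_{i_t} − ỹ^k_{i_t}) + G^k_{x,j_t}, and symmetrically ∇^t_{y,i_t} = a_{i_t j'_t}(x^t_{j'_t} − x̃^k_{j'_t}) + G^k_{y,i_t} and ∇'^t_{y,i_t} = a_{i_t j_t}(x̄^t_{j_t} − x̃^k_{j_t}) + G^k_{y,i_t}. Then, conditioned on the σ-algebra F_t of indices sampled before iteration t, for every y ∈ Y and x ∈ X: E[(∇^t_{x,j_t} − ∇'^t_{x,j_t})² | F_t] ≤ (8R²/(nd))‖y − ỹ^k‖² + (12R²/(nd))‖y^t − y‖² + (8R²/d)·E[‖y^t − ȳ^t‖² | F_t], and E[(∇^t_{y,i_t} − ∇'^t_{y,i_t})² | F_t] ≤ (8R'²/(nd))‖x − x̃^k‖² + (12R'²/(nd))‖x^t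 − x‖² + (8R'²/n)·E[‖x^t − x̄^t‖² | F_t]. -/
/-!
Split `a_{i'j}(y^t_{i'} - ỹ_{i'}) - a_{ij}(ȳ_i - ỹ_i)` into five terms through `y^t` and the
comparison point `y`, and apply Young's inequality with weights `6, 4, 8, 6, 4`, whose reciprocals
sum to less than `1`. Averaging over the samples, each term is controlled by the row bound
`∑_j a_{ij}^2 ≤ R^2`; the bound for `x` is the bound for `y` applied to `Aᵀ`.
-/

/-- Real-valued restriction of the convex conjugate `φ*(y) = sup_u {y·u − φ(u)}`. -/
noncomputable def phiStar (φ : ℝ → ℝ) (y : ℝ) : ℝ :=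
  sSup (Set.range fun u => y * u - φ u)

/-- Effective domain of the convex conjugate of `φ`. -/
def Ydom (φ : ℝ → ℝ) : Set ℝ :=
  {y | BddAbove (Set.range fun u => y * u - φ u)}

open Finset

lemma sq_add_five_le (p q r s u : ℝ) :
    (p + q + r + s + u) ^ 2 ≤ 6 * p ^ 2 + 4 * q ^ 2 + 8 * r ^ 2 + 6 * s ^ 2 + 4 * u ^ 2 := by
  nlinarith [sq_nonneg (6*p-4*q), sq_nonneg (6*p-8*r), sq_nonneg (6*p-6*s), sq_nonneg (6*p-4*u),
    sq_nonneg (4*q-8*r), sq_nonneg (4*q-6*s), sq_nonneg (4*q-4*u), sq_nonneg (8*r-6*s),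
    sq_nonneg (8*r-4*u), sq_nonneg (6*s-4*u), sq_nonneg p, sq_nonneg q, sq_nonneg r,
    sq_nonneg s, sq_nonneg u]

lemma sq_mul_sub_sub_mul_sub_le (β β' u u' ũ ũ' y y' v : ℝ) :
    (β' * (u' - ũ') - β * (v - ũ)) ^ 2 ≤
      β' ^ 2 * (6 * (u' - y') ^ 2 + 4 * (y' - ũ') ^ 2) +
        β ^ 2 * (8 * (u - v) ^ 2 + (6 * (u - y) ^ 2 + 4 * (y - ũ) ^ 2)) := by
  convert sq_add_five_le (β' * (u' - y')) (β' * (y' - ũ')) (β * (u - v)) (-(β * (u - y)))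
    (-(β * (y - ũ))) using 1 <;> ring

variable {ι κ : Type*} [Fintype ι] [Fintype κ]

lemma sum_sum_sq_mul_le {b : ι → κ → ℝ} {R : ℝ} (hb : ∀ i, ∑ j, b i j ^ 2 ≤ R ^ 2)
    {w : ι → ℝ} (hw : ∀ i, 0 ≤ w i) :
    ∑ i, ∑ j, b i j ^ 2 * w i ≤ R ^ 2 * ∑ i, w i :=
  calc ∑ i, ∑ j, b i j ^ 2 * w i = ∑ i, (∑ j, b i j ^ 2) * w i := by simp only [sum_mul]
    _ ≤ ∑ i, R ^ 2 * w i := by gcongr with i; exacts [hw i, hb i]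
    _ = R ^ 2 * ∑ i, w i := (mul_sum ..).symm

lemma sum_sq_mul_sub_sub_mul_sub_le {b : ι → κ → ℝ} {R : ℝ}
    (hb : ∀ i, ∑ j, b i j ^ 2 ≤ R ^ 2)
    (u ũ y : ι → ℝ) (w : ι → κ → ι → ℝ) :
    ∑ i, ∑ i', ∑ j, ∑ j', (b i' j * (u i' - ũ i') - b i j * (w i j' i - ũ i)) ^ 2 ≤
      8 * R ^ 2 * Fintype.card ι * Fintype.card κ * ∑ k, (y k - ũ k) ^ 2 +
        12 * R ^ 2 * Fintype.card ι * Fintype.card κ * ∑ k, (u k - y k) ^ 2 +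
        8 * R ^ 2 * Fintype.card ι * ∑ i, ∑ j', ∑ k, (u k - w i j' k) ^ 2 := by
  set c : ι → ℝ := fun k => 6 * (u k - y k) ^ 2 + 4 * (y k - ũ k) ^ 2 with hc
  set S : ι → κ → ℝ := fun i j' => ∑ k, (u k - w i j' k) ^ 2
  have hc0 : ∀ k, 0 ≤ c k := fun k => by positivity
  calc _ ≤ ∑ i, ∑ i', ∑ j, ∑ j',
          (b i' j ^ 2 * c i' + b i j ^ 2 * (8 * S i j' + c i)) := by
        gcongr with i _ i' _ j _ j' _
        refine (sq_mul_sub_sub_mul_sub_le _ _ (u i) _ _ _ (y i) (y i') _).trans ?_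
        gcongr
        exact single_le_sum (f := fun k => (u k - w i j' k) ^ 2) (fun k _ => sq_nonneg _)
          (mem_univ i)
    _ = Fintype.card ι * Fintype.card κ * ∑ i', ∑ j, b i' j ^ 2 * c i' + Fintype.card ι *
          ∑ i, ∑ j, b i j ^ 2 * (8 * ∑ j', S i j' + Fintype.card κ * c i) := by
        simp only [sum_add_distrib, sum_const, card_univ, nsmul_eq_mul, mul_sum, mul_add,
          mul_assoc, mul_left_comm (b _ _ ^ 2)]
    _ ≤ Fintype.card ι * Fintype.card κ * (R ^ 2 * ∑ i, c i) +
          Fintype.card ι * (R ^ 2 * ∑ i, (8 * ∑ j', S i j' + Fintype.card κ * c i)) := by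
        gcongr
        exacts [sum_sum_sq_mul_le hb hc0, sum_sum_sq_mul_le hb fun i => by positivity]
    _ = _ := by
        have hsum_c : ∑ i, c i = 6 * ∑ k, (u k - y k) ^ 2 + 4 * ∑ k, (y k - ũ k) ^ 2 := by
          simp only [hc, sum_add_distrib, mul_sum]
        simp only [sum_add_distrib, ← mul_sum, hsum_c]
        ring

lemma sum_sum_sum_sum_comm {M : Type*} [AddCommMonoid M] (f : ι → ι → κ → κ → M) :
    ∑ i, ∑ i', ∑ j, ∑ j', f i i' j j' = ∑ j, ∑ j', ∑ i, ∑ i', f i i' j j' := by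
  calc ∑ i, ∑ i', ∑ j, ∑ j', f i i' j j'
      = ∑ p : ι × ι, ∑ q : κ × κ, f p.1 p.2 q.1 q.2 := by
        simp only [Fintype.sum_prod_type]
    _ = ∑ q : κ × κ, ∑ p : ι × ι, f p.1 p.2 q.1 q.2 := sum_comm
    _ = _ := by simp only [Fintype.sum_prod_type]

/-- The conditional expectation given `F_t` is the average over the uniformly sampled indices
`(i, i', j, j')`; `xbar i' j` and `ybar i j'` are `x̄^t` and `ȳ^t` for these samples. -/
theorem stmt_7_general (n d : ℕ) (hn : 0 < n) (hd : 0 < d)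
    (a : Fin n → Fin d → ℝ) (R R' : ℝ)
    (hR : IsGreatest (Set.range fun i => Real.sqrt (∑ j, (a i j) ^ 2)) R)
    (hR' : IsGreatest (Set.range fun j => Real.sqrt (∑ i, (a i j) ^ 2)) R')
    (XX : Set (Fin d → ℝ)) (YY : Set (Fin n → ℝ))
    -- current iterates and snapshots
    (xt : Fin d → ℝ) (yt : Fin n → ℝ) (xtil : Fin d → ℝ) (ytil : Fin n → ℝ)
    -- full gradients at the snapshot
    (Gx : Fin d → ℝ) (Gy : Fin n → ℝ)
    -- intermediate iterates: `xbar i' j` is `x̄^t` when the sampled pair is `(i', j)`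
    (xbar : Fin n → Fin d → Fin d → ℝ) (ybar : Fin n → Fin d → Fin n → ℝ) :
    (∀ y ∈ YY,
      (∑ i : Fin n, ∑ i' : Fin n, ∑ j : Fin d, ∑ j' : Fin d,
          ((a i' j * (yt i' - ytil i') + Gx j)
            - (a i j * (ybar i j' i - ytil i) + Gx j)) ^ 2) /
          ((n : ℝ) ^ 2 * (d : ℝ) ^ 2)
        ≤ 8 * R ^ 2 / ((n : ℝ) * (d : ℝ)) * (∑ k, (y k - ytil k) ^ 2)
          + 12 * R ^ 2 / ((n : ℝ) * (d : ℝ)) * (∑ k, (yt k - y k) ^ 2)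
          + 8 * R ^ 2 / (d : ℝ) *
            ((∑ i : Fin n, ∑ j' : Fin d, ∑ k, (yt k - ybar i j' k) ^ 2) /
              ((n : ℝ) * (d : ℝ)))) ∧
    (∀ x ∈ XX,
      (∑ i : Fin n, ∑ i' : Fin n, ∑ j : Fin d, ∑ j' : Fin d,
          ((a i j' * (xt j' - xtil j') + Gy i)
            - (a i j * (xbar i' j j - xtil j) + Gy i)) ^ 2) /
          ((n : ℝ) ^ 2 * (d : ℝ) ^ 2)
        ≤ 8 * R' ^ 2 / ((n : ℝ) * (d : ℝ)) * (∑ k, (x k - xtil k) ^ 2)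
          + 12 * R' ^ 2 / ((n : ℝ) * (d : ℝ)) * (∑ k, (xt k - x k) ^ 2)
          + 8 * R' ^ 2 / (n : ℝ) *
            ((∑ i' : Fin n, ∑ j : Fin d, ∑ k, (xt k - xbar i' j k) ^ 2) /
              ((n : ℝ) * (d : ℝ)))) := by
  have hrow : ∀ i, ∑ j, a i j ^ 2 ≤ R ^ 2 := fun i =>
    (Real.sqrt_le_iff.1 (hR.2 ⟨i, rfl⟩)).2
  have hcol : ∀ j, ∑ i, a i j ^ 2 ≤ R' ^ 2 := fun j =>
    (Real.sqrt_le_iff.1 (hR'.2 ⟨j, rfl⟩)).2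
  have hn0 : (n : ℝ) ≠ 0 := by positivity
  have hd0 : (d : ℝ) ≠ 0 := by positivity
  simp only [add_sub_add_right_eq_sub]
  refine ⟨fun y _ => ?_, fun x _ => ?_⟩
  · rw [div_le_iff₀ (by positivity)]
    refine (sum_sq_mul_sub_sub_mul_sub_le hrow yt ytil y ybar).trans (le_of_eq ?_)
    simp only [Fintype.card_fin]
    field_simp
  · rw [div_le_iff₀ (by positivity), sum_sum_sum_sum_comm]
    refine (sum_sq_mul_sub_sub_mul_sub_le hcol xt xtil x fun j i' => xbar i' j).trans (le_of_eq ?_)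
    rw [sum_comm (γ := Fin d)]
    simp only [Fintype.card_fin]
    field_simp

/-- Lemma 4 (gradient variance bounds for SPD1-VR).  One inner iteration at outer
stage `k`, conditioned on the past: the current iterates `x^t, y^t` and snapshots
`x̃, ỹ` are fixed, the sampled indices `(i, i', j, j')` are uniform, and
`x̄ = xbar i' j`, `ȳ = ybar i j'` are the intermediate proximal iterates.
Conditional expectation is the average over the sampled indices. -/
theorem stmt_7 (n d : ℕ) (hn : 0 < n) (hd : 0 < d)
    (a : Fin n → Fin d → ℝ) (R R' : ℝ)
    (hR : IsGreatest (Set.range fun i => Real.sqrt (∑ j, (a i j) ^ 2)) R)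
    (hR' : IsGreatest (Set.range fun j => Real.sqrt (∑ i, (a i j) ^ 2)) R')
    (Xs : Fin d → Set ℝ) (hXconv : ∀ j, Convex ℝ (Xs j)) (hXcl : ∀ j, IsClosed (Xs j))
    (g : Fin d → ℝ → ℝ) (hgconv : ∀ j, ConvexOn ℝ (Xs j) (g j))
    (hglsc : ∀ j, LowerSemicontinuousOn (g j) (Xs j))
    (φ : Fin n → ℝ → ℝ) (hφconv : ∀ i, ConvexOn ℝ Set.univ (φ i))
    (XX : Set (Fin d → ℝ)) (hXX : XX = {x | ∀ j, x j ∈ Xs j})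
    (YY : Set (Fin n → ℝ)) (hYY : YY = {y | ∀ i, y i ∈ Ydom (φ i)})
    (η τ : ℝ) (hη : 0 < η) (hτ : 0 < τ)
    -- current iterates and snapshots
    (xt : Fin d → ℝ) (hxt : xt ∈ XX) (yt : Fin n → ℝ) (hyt : yt ∈ YY)
    (xtil : Fin d → ℝ) (hxtil : xtil ∈ XX) (ytil : Fin n → ℝ) (hytil : ytil ∈ YY)
    -- full gradients at the snapshot
    (Gx : Fin d → ℝ) (hGx : ∀ j, Gx j = (∑ i, a i j * ytil i) / (n : ℝ))
    (Gy : Fin n → ℝ) (hGy : ∀ i, Gy i = (∑ j, a i j * xtil j) / (d : ℝ))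
    -- intermediate iterates: `xbar i' j` is `x̄^t` when the sampled pair is `(i', j)`
    (xbar : Fin n → Fin d → Fin d → ℝ) (ybar : Fin n → Fin d → Fin n → ℝ)
    (hxbar : ∀ (i' : Fin n) (j : Fin d),
      (∀ k, k ≠ j → xbar i' j k = xt k) ∧ xbar i' j j ∈ Xs j ∧
      ∀ z ∈ Xs j,
        η * g j (xbar i' j j) +
            (xbar i' j j -
              (xt j - η * (a i' j * (yt i' - ytil i') + Gx j))) ^ 2 / 2 ≤
          η * g j z +
            (z - (xt j - η * (a i' j * (yt i' - ytil i') + Gx j))) ^ 2 / 2)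
    (hybar : ∀ (i : Fin n) (j' : Fin d),
      (∀ k, k ≠ i → ybar i j' k = yt k) ∧ ybar i j' i ∈ Ydom (φ i) ∧
      ∀ z ∈ Ydom (φ i),
        (τ / (d : ℝ)) * phiStar (φ i) (ybar i j' i) +
            (ybar i j' i -
              (yt i + τ * (a i j' * (xt j' - xtil j') + Gy i))) ^ 2 / 2 ≤
          (τ / (d : ℝ)) * phiStar (φ i) z +
            (z - (yt i + τ * (a i j' * (xt j' - xtil j') + Gy i))) ^ 2 / 2) :
    (∀ y ∈ YY,
      (∑ i : Fin n, ∑ i' : Fin n, ∑ j : Fin d, ∑ j' : Fin d,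
          ((a i' j * (yt i' - ytil i') + Gx j)
            - (a i j * (ybar i j' i - ytil i) + Gx j)) ^ 2) /
          ((n : ℝ) ^ 2 * (d : ℝ) ^ 2)
        ≤ 8 * R ^ 2 / ((n : ℝ) * (d : ℝ)) * (∑ k, (y k - ytil k) ^ 2)
          + 12 * R ^ 2 / ((n : ℝ) * (d : ℝ)) * (∑ k, (yt k - y k) ^ 2)
          + 8 * R ^ 2 / (d : ℝ) *
            ((∑ i : Fin n, ∑ j' : Fin d, ∑ k, (yt k - ybar i j' k) ^ 2) /
              ((n : ℝ) * (d : ℝ)))) ∧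
    (∀ x ∈ XX,
      (∑ i : Fin n, ∑ i' : Fin n, ∑ j : Fin d, ∑ j' : Fin d,
          ((a i j' * (xt j' - xtil j') + Gy i)
            - (a i j * (xbar i' j j - xtil j) + Gy i)) ^ 2) /
          ((n : ℝ) ^ 2 * (d : ℝ) ^ 2)
        ≤ 8 * R' ^ 2 / ((n : ℝ) * (d : ℝ)) * (∑ k, (x k - xtil k) ^ 2)
          + 12 * R' ^ 2 / ((n : ℝ) * (d : ℝ)) * (∑ k, (xt k - x k) ^ 2)
          + 8 * R' ^ 2 / (n : ℝ) *
            ((∑ i' : Fin n, ∑ j : Fin d, ∑ k, (xt k - xbar i' j k) ^ 2) /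
              ((n : ℝ) * (d : ℝ)))) :=
  stmt_7_general n d hn hd a R R' hR hR' XX YY xt yt xtil ytil Gx Gy xbar ybar
end

section
/- (Lemma 5, one-step inequality for SPD1-VR) Assume g is μ-strongly convex (μ > 0), each φ_i* is γ-strongly convex (γ > 0), and the step sizes satisfy ημ ≤ 1 and τγ/d ≤ 1. In the t-th inner iteration of SPD1-VR at outer stage k, define x'^t ∈ X by x'^t_j = prox_{η g_j}(x^t_j − η(a_{i'_t j}(y^t_{i'_t} − ỹ^k_{i'_t}) + G^k_{x,j})) for every j ∈ [d], and y'^t ∈ Y by y'^t_i = prox_{(τ/d)φ_i*}(y^t_i + τ(a_{i j'_t}(x^t_{j'_t} − x̃^k_{j'_t}) + G^k_{y,i})) for every i ∈ [n]. Then, conditioned on the σ-algebra F_t of indices sampled before iteration t, for any x ∈ X and y ∈ Y: (1/(2η))·E[(1 − ημ/(4d) + 12R'²ητ/(nd))‖x^t − x‖² − ‖x^{t+1} − x‖² − (1/2 − 8ητR'²/n)‖x^t − x̄^t‖² | F_t] + (1/(2τ))·E[(1 − τγ/(4nd) + 12R²ητ/(nd))‖y^t − y‖² − ‖y^{t+1}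 − y‖² − (1/2 − 8ητR²/d)‖y^t − ȳ^t‖² | F_t] ≥ (1/d)·E[F(x'^t, y) − F(x, y'^t) | F_t] − (4ηR²/(nd))‖ỹ^k − y‖² − (4τR'²/(nd))‖x̃^k − x‖². -/
open Topology Finset
open scoped BigOperators

section ProximalStep

theorem IsMinOn.add_mul_sq_le {s : Set ℝ} {f : ℝ → ℝ} {m p z : ℝ}
    (hf : ConvexOn ℝ s fun w => f w - m / 2 * w ^ 2) (hmin : IsMinOn f s p) (hp : p ∈ s)
    (hz : z ∈ s) : f p + m / 2 * (z - p) ^ 2 ≤ f z := by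
  have hseg : ∀ t ∈ Set.Ioo (0 : ℝ) 1, f p + m / 2 * (1 - t) * (z - p) ^ 2 ≤ f z := by
    rintro t ⟨ht₀, ht₁⟩
    have hmin_t := isMinOn_iff.1 hmin _ (hf.1 hp hz (sub_nonneg.2 ht₁.le) ht₀.le (by ring))
    have hconv := hf.2 hp hz (sub_nonneg.2 ht₁.le) ht₀.le (by ring)
    simp only [smul_eq_mul] at hmin_t hconv
    refine le_of_mul_le_mul_left ?_ ht₀
    linear_combination hmin_t + hconv
  refine le_of_tendsto (f := fun t => f p + m / 2 * (1 - t) * (z - p) ^ 2) (x := 𝓝[>] 0) ?_ ?_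
  · exact tendsto_nhdsWithin_of_tendsto_nhds (Continuous.tendsto' (by fun_prop) 0 _ (by ring))
  · filter_upwards [Ioo_mem_nhdsGT one_pos] with t ht using hseg t ht

theorem ConvexOn.add_sub_sq_div_two {s : Set ℝ} {ψ : ℝ → ℝ} {κ : ℝ}
    (hψ : ConvexOn ℝ s fun z => ψ z - κ / 2 * z ^ 2) (c : ℝ) :
    ConvexOn ℝ s fun z => ψ z + (z - c) ^ 2 / 2 - (1 + κ) / 2 * z ^ 2 := by
  refine ⟨hψ.1, fun a ha b hb α β hα hβ hαβ => ?_⟩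
  have h := hψ.2 ha hb hα hβ hαβ
  simp only [smul_eq_mul] at h ⊢
  linear_combination h - c ^ 2 / 2 * hαβ

theorem ConvexOn.const_mul_sub_sq {s : Set ℝ} {f : ℝ → ℝ} {μ c : ℝ}
    (hf : ConvexOn ℝ s fun z => f z - μ / 2 * z ^ 2) (hc : 0 ≤ c) :
    ConvexOn ℝ s fun z => c * f z - c * μ / 2 * z ^ 2 := by
  refine ⟨hf.1, fun a ha b hb α β hα hβ hαβ => ?_⟩
  have h := hf.2 ha hb hα hβ hαβ
  simp only [smul_eq_mul] at h ⊢
  linear_combination c * h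

/-- `p` is the look-ahead prox point (centre `c`) and `u` the actual update (centre `c'`);
for a gradient step `c' = x₀ - η v` the factor `x₀ - c'` is `η v`. -/
theorem extragradient_prox_le {s : Set ℝ} {ψ : ℝ → ℝ} {κ : ℝ}
    (hψ : ConvexOn ℝ s fun z => ψ z - κ / 2 * z ^ 2) (hκ₀ : 0 ≤ κ) (hκ₁ : κ ≤ 1)
    {x₀ x p u c c' : ℝ} (hx : x ∈ s) (hp : p ∈ s) (hu : u ∈ s)
    (hp_min : IsMinOn (fun z => ψ z + (z - c) ^ 2 / 2) s p)
    (hu_min : IsMinOn (fun z => ψ z + (z - c') ^ 2 / 2) s u) :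
    2 * (ψ p - ψ x + (x₀ - c') * (p - x)) ≤
      (1 - κ / 4) * (x₀ - x) ^ 2 - (u - x) ^ 2 - (x₀ - p) ^ 2 / 2 + 2 * (c - c') ^ 2 := by
  have hux := hu_min.add_mul_sq_le (hψ.add_sub_sq_div_two c') hu hx
  have hpu := hp_min.add_mul_sq_le (hψ.add_sub_sq_div_two c) hp hu
  have hup := hu_min.add_mul_sq_le (hψ.add_sub_sq_div_two c') hu hp
  -- `hpu` and `hup` together say that the prox map is 1-Lipschitz in its centre.
  have hlip : (p - u) * (c - c') ≤ (c - c') ^ 2 := by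
    nlinarith [sq_nonneg (p - u - (c - c')), mul_nonneg hκ₀ (sq_nonneg (p - u))]
  nlinarith [mul_nonneg hκ₀ (sq_nonneg ((x₀ - p) - (p - u) - (u - x))),
    mul_nonneg hκ₀ (sq_nonneg ((p - u) - (u - x))),
    mul_nonneg (sub_nonneg.2 hκ₁) (sq_nonneg (x₀ - p)), sq_nonneg (u - p)]

end ProximalStep

section Averages

variable {ι κ : Type*} [Fintype ι] [Fintype κ]

theorem expect_sub_sq_eq [Nonempty ι] (u : ι → ℝ) (t : ℝ) :
    𝔼 i, (t - u i) ^ 2 = (t - 𝔼 i, u i) ^ 2 + 𝔼 i, (u i - 𝔼 j, u j) ^ 2 := by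
  set m := 𝔼 j, u j
  have hcentred : 𝔼 i, (u i - m) = 0 := by
    rw [expect_sub_distrib, Fintype.expect_const, sub_self]
  calc 𝔼 i, (t - u i) ^ 2 = 𝔼 i, ((t - m) ^ 2 - 2 * (t - m) * (u i - m) + (u i - m) ^ 2) :=
        expect_congr rfl fun i _ => by ring
    _ = _ := by
        rw [expect_add_distrib, expect_sub_distrib, Fintype.expect_const, ← mul_expect,
          hcentred, mul_zero, sub_zero]

theorem expect_sq_sub_expect_le [Nonempty ι] (u : ι → ℝ) :
    𝔼 i, (u i - 𝔼 j, u j) ^ 2 ≤ 𝔼 i, u i ^ 2 := by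
  have h := expect_sub_sq_eq u 0
  simp only [zero_sub, neg_sq] at h
  linarith [sq_nonneg (𝔼 j, u j)]

/-- Centre at the mean `m` of `u`: `(X - m)² ≤ 4 (X - uᵢ)² + 4/3 (uᵢ - m)²`, and averaging over
the independent index `i'` adds the variance of `u`. -/
theorem expect_expect_expect_sub_sq_le [Nonempty ι] [Nonempty κ] (u : ι → ℝ) (X : ι → κ → ℝ) :
    𝔼 i, 𝔼 i', 𝔼 k, (X i k - u i') ^ 2 ≤
      7 / 3 * 𝔼 i, u i ^ 2 + 4 * 𝔼 i, 𝔼 k, (X i k - u i) ^ 2 := by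
  set m := 𝔼 j, u j
  set V := 𝔼 i, (u i - m) ^ 2
  have hpt : ∀ i k,
      𝔼 i', (X i k - u i') ^ 2 ≤ 4 * (X i k - u i) ^ 2 + 4 / 3 * (u i - m) ^ 2 + V := by
    intro i k
    rw [expect_sub_sq_eq]
    linarith [sq_nonneg (3 * (X i k - u i) - (u i - m))]
  calc 𝔼 i, 𝔼 i', 𝔼 k, (X i k - u i') ^ 2 = 𝔼 i, 𝔼 k, 𝔼 i', (X i k - u i') ^ 2 :=
        expect_congr rfl fun i _ => expect_comm _ _ _
    _ ≤ 𝔼 i, 𝔼 k, (4 * (X i k - u i) ^ 2 + 4 / 3 * (u i - m) ^ 2 + V) := by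
        gcongr with i _ k _
        exact hpt i k
    _ = 4 * 𝔼 i, 𝔼 k, (X i k - u i) ^ 2 + 7 / 3 * V := by
        simp only [expect_add_distrib, Fintype.expect_const, ← mul_expect]
        ring
    _ ≤ _ := by linarith [expect_sq_sub_expect_le u]

theorem expect_expect_mul_sq_le (a : ι → κ → ℝ) {R : ℝ} (ha : ∀ i, ∑ k, a i k ^ 2 ≤ R ^ 2)
    (w : ι → ℝ) : 𝔼 k, 𝔼 i, (a i k * w i) ^ 2 ≤ R ^ 2 / Fintype.card κ * 𝔼 i, w i ^ 2 := by
  rw [expect_comm, mul_expect]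
  gcongr with i _
  rw [Fintype.expect_eq_sum_div_card]
  calc (∑ k, (a i k * w i) ^ 2) / Fintype.card κ
      = (∑ k, a i k ^ 2) / Fintype.card κ * w i ^ 2 := by
        simp only [mul_pow, ← sum_mul]
        ring
    _ ≤ R ^ 2 / Fintype.card κ * w i ^ 2 := by gcongr; exact ha i

theorem expect_sub_sq_le (a b c : κ → ℝ) :
    𝔼 k, (a k - b k) ^ 2 ≤ 5 / 2 * 𝔼 k, (a k - c k) ^ 2 + 5 / 3 * 𝔼 k, (b k - c k) ^ 2 := by
  rw [mul_expect, mul_expect, ← expect_add_distrib]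
  gcongr with k _
  linarith [sq_nonneg (3 * (a k - c k) + 2 * (b k - c k))]

theorem sum_mul_sub_add_mean_eq (w Y Ys : κ → ℝ) {G : ℝ}
    (hG : G * Fintype.card κ = ∑ k, w k * Ys k) :
    ∑ k, (w k * (Y k - Ys k) + G) = ∑ k, w k * Y k := by
  rw [sum_add_distrib, sum_const, card_univ, nsmul_eq_mul, mul_comm, hG, ← sum_add_distrib]
  exact sum_congr rfl fun k _ => by ring

theorem sum_sq_sub_of_eq_off [DecidableEq κ] {u w : κ → ℝ} {j : κ} (h : ∀ k, k ≠ j → u k = w k)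
    (x : κ → ℝ) :
    ∑ k, (u k - x k) ^ 2 = ∑ k, (w k - x k) ^ 2 - (w j - x j) ^ 2 + (u j - x j) ^ 2 := by
  rw [← add_sum_erase _ _ (mem_univ j), ← add_sum_erase _ _ (mem_univ j),
    sum_congr rfl fun k hk => by rw [h k (ne_of_mem_erase hk)]]
  ring

theorem sum_sq_sub_update [DecidableEq κ] (w : κ → ℝ) (j : κ) (p : ℝ) :
    ∑ k, (w k - Function.update w j p k) ^ 2 = (w j - p) ^ 2 := by
  rw [sum_eq_single j (fun k _ hk => by simp [Function.update_of_ne hk]) (by simp),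
    Function.update_self]

variable {α β γ δ : Type*} [Fintype α] [Fintype β] [Fintype γ] [Fintype δ]

theorem expect_expect_comm_left (f : α → β → γ → ℝ) :
    𝔼 a, 𝔼 b, 𝔼 c, f a b c = 𝔼 b, 𝔼 c, 𝔼 a, f a b c := by
  rw [expect_comm]
  exact expect_congr rfl fun b _ => expect_comm _ _ _

theorem expect_comm_pairs (f : α → β → γ → δ → ℝ) :
    𝔼 a, 𝔼 b, 𝔼 c, 𝔼 d, f a b c d = 𝔼 c, 𝔼 d, 𝔼 a, 𝔼 b, f a b c d :=
  (expect_congr rfl fun _ _ => expect_expect_comm_left _).trans (expect_expect_comm_left _)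

theorem expect_interleave (f : α → β → γ → δ → ℝ) :
    𝔼 a, 𝔼 b, 𝔼 c, 𝔼 d, f a b c d = 𝔼 b, 𝔼 d, 𝔼 a, 𝔼 c, f a b c d :=
  (expect_comm _ _ _).trans
    (expect_congr rfl fun _ _ => (expect_expect_comm_left fun d a c => f a _ c d).symm)

theorem sum_sum_sum_sum_div_eq_expect {n d : ℕ} (f : Fin n → Fin n → Fin d → Fin d → ℝ) :
    (∑ i, ∑ i', ∑ j, ∑ j', f i i' j j') / ((n : ℝ) ^ 2 * (d : ℝ) ^ 2) =
      𝔼 i, 𝔼 i', 𝔼 j, 𝔼 j', f i i' j j' := by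
  simp only [Fintype.expect_eq_sum_div_card, Fintype.card_fin, ← sum_div, div_div]
  ring

end Averages

/-! In the lemmas below `(i, i', j, j')` is the uniformly sampled index quadruple: the primal
look-ahead `p i'` uses the row `i'`, the dual look-ahead `q j'` the column `j'`, and the actual
update at `(i, j)` uses the look-ahead of the other block. -/

namespace SPD1VR

variable {n d : ℕ} [NeZero n] [NeZero d]

theorem expect_dual_estimator_sq_le (a : Fin n → Fin d → ℝ) {R' : ℝ}
    (hR' : ∀ j, ∑ i, a i j ^ 2 ≤ R' ^ 2) (x₀ x xs : Fin d → ℝ) (p : Fin n → Fin d → ℝ) :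
    𝔼 i, 𝔼 i', 𝔼 j, 𝔼 j', (a i j * (p i' j - xs j) - a i j' * (x₀ j' - xs j')) ^ 2 ≤
      R' ^ 2 / (n * d) * (6 * ∑ k, (x₀ k - x k) ^ 2 + 4 * ∑ k, (xs k - x k) ^ 2) +
        4 * R' ^ 2 / n * 𝔼 i', 𝔼 j, (x₀ j - p i' j) ^ 2 := by
  have hcol := expect_expect_mul_sq_le (fun j i => a i j) hR'
  simp only [Fintype.card_fin] at hcol
  have hvar : ∀ i,
      𝔼 i', 𝔼 j, 𝔼 j', (a i j * (p i' j - xs j) - a i j' * (x₀ j' - xs j')) ^ 2 ≤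
        7 / 3 * 𝔼 j, (a i j * (x₀ j - xs j)) ^ 2 +
          4 * 𝔼 i', 𝔼 j, (a i j * (x₀ j - p i' j)) ^ 2 := by
    intro i
    rw [expect_expect_comm_left, expect_comm (f := fun i' j => (a i j * (x₀ j - p i' j)) ^ 2)]
    convert expect_expect_expect_sub_sq_le (fun j => a i j * (x₀ j - xs j))
      (fun j i' => a i j * (p i' j - xs j)) using 5 with j _ i' _
    ring
  calc _ ≤ 𝔼 i, (7 / 3 * 𝔼 j, (a i j * (x₀ j - xs j)) ^ 2 +
          4 * 𝔼 i', 𝔼 j, (a i j * (x₀ j - p i' j)) ^ 2) := by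
        gcongr with i _
        exact hvar i
    _ = 7 / 3 * 𝔼 i, 𝔼 j, (a i j * (x₀ j - xs j)) ^ 2 +
          4 * 𝔼 i', 𝔼 i, 𝔼 j, (a i j * (x₀ j - p i' j)) ^ 2 := by
        rw [expect_add_distrib, ← mul_expect, ← mul_expect,
          expect_comm (f := fun i i' => 𝔼 j, (a i j * (x₀ j - p i' j)) ^ 2)]
    _ ≤ 7 / 3 * (R' ^ 2 / n * 𝔼 j, (x₀ j - xs j) ^ 2) +
          4 * 𝔼 i', (R' ^ 2 / n * 𝔼 j, (x₀ j - p i' j) ^ 2) := by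
        gcongr with i' _
        · exact hcol _
        · exact hcol _
    _ ≤ _ := by
        have hyoung := expect_sub_sq_le x₀ xs x
        have hA : 0 ≤ ∑ k, (x₀ k - x k) ^ 2 := by positivity
        have hB : 0 ≤ ∑ k, (xs k - x k) ^ 2 := by positivity
        rw [← mul_expect]
        simp only [Fintype.expect_eq_sum_div_card, Fintype.card_fin] at hyoung ⊢
        -- `7/3 · 5/2 ≤ 6` and `7/3 · 5/3 ≤ 4`
        linear_combination 7 / 3 * R' ^ 2 / n * hyoung + R' ^ 2 / n / d * (hA / 6 + hB / 9)

theorem expect_primal_step_le (a : Fin n → Fin d → ℝ) {R' : ℝ}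
    (hR' : ∀ j, ∑ i, a i j ^ 2 ≤ R' ^ 2) {S : Fin d → Set ℝ} {ψ : Fin d → ℝ → ℝ} {μ η τ : ℝ}
    (hψ : ∀ j, ConvexOn ℝ (S j) fun z => ψ j z - μ / 2 * z ^ 2) (hμ : 0 ≤ μ) (hη : 0 < η)
    (hτ : 0 ≤ τ) (hημ : η * μ ≤ 1) (x₀ x xs : Fin d → ℝ) (hx : ∀ j, x j ∈ S j)
    (p G' : Fin n → Fin d → ℝ)
    (hp : ∀ i' j, p i' j ∈ S j ∧ ∀ z ∈ S j,
      η * ψ j (p i' j) + (p i' j - (x₀ j - η * G' i' j)) ^ 2 / 2 ≤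
        η * ψ j z + (z - (x₀ j - η * G' i' j)) ^ 2 / 2)
    (u : Fin n → Fin n → Fin d → Fin d → Fin d → ℝ) (G : Fin n → Fin n → Fin d → Fin d → ℝ)
    (hu : ∀ i i' j j', (∀ k, k ≠ j → u i i' j j' k = x₀ k) ∧ u i i' j j' j ∈ S j ∧
      ∀ z ∈ S j,
        η * ψ j (u i i' j j' j) + (u i i' j j' j - (x₀ j - η * G i i' j j')) ^ 2 / 2 ≤
          η * ψ j z + (z - (x₀ j - η * G i i' j j')) ^ 2 / 2) :
    𝔼 i, 𝔼 i', 𝔼 j, 𝔼 j', (ψ j (p i' j) - ψ j (x j) + G i i' j j' * (p i' j - x j)) +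
        τ * 𝔼 i, 𝔼 i', 𝔼 j, 𝔼 j', (a i j * (p i' j - xs j) - a i j' * (x₀ j' - xs j')) ^ 2 ≤
      1 / (2 * η) * 𝔼 i, 𝔼 i', 𝔼 j, 𝔼 j',
          ((1 - η * μ / (4 * d) + 12 * R' ^ 2 * η * τ / (n * d)) * ∑ k, (x₀ k - x k) ^ 2
            - ∑ k, (u i i' j j' k - x k) ^ 2
            - (1 / 2 - 8 * η * τ * R' ^ 2 / n) *
                ∑ k, (x₀ k - Function.update x₀ j (p i' j) k) ^ 2)
        + 4 * τ * R' ^ 2 / (n * d) * ∑ k, (xs k - x k) ^ 2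
        + η * 𝔼 i, 𝔼 i', 𝔼 j, 𝔼 j', (G i i' j j' - G' i' j) ^ 2 := by
  have hstep : ∀ i i' j j',
      2 * η * (ψ j (p i' j) - ψ j (x j) + G i i' j j' * (p i' j - x j)) ≤
        (1 - η * μ / 4) * (x₀ j - x j) ^ 2 - (u i i' j j' j - x j) ^ 2
          - (x₀ j - p i' j) ^ 2 / 2 + 2 * η ^ 2 * (G i i' j j' - G' i' j) ^ 2 := by
    intro i i' j j'
    have h := extragradient_prox_le ((hψ j).const_mul_sub_sq hη.le) (by positivity) hημ
      (x₀ := x₀ j) (hx j) (hp i' j).1 (hu i i' j j').2.1 (isMinOn_iff.2 (hp i' j).2)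
      (isMinOn_iff.2 (hu i i' j j').2.2)
    linear_combination h
  have hsum : 𝔼 i, 𝔼 i', 𝔼 j, 𝔼 j',
        2 * η * (ψ j (p i' j) - ψ j (x j) + G i i' j j' * (p i' j - x j)) ≤
      𝔼 i, 𝔼 i', 𝔼 j, 𝔼 j', ((1 - η * μ / 4) * (x₀ j - x j) ^ 2 - (u i i' j j' j - x j) ^ 2
        - (x₀ j - p i' j) ^ 2 / 2 + 2 * η ^ 2 * (G i i' j j' - G' i' j) ^ 2) := by
    gcongr with i _ i' _ j _ j' _
    exact hstep i i' j j'
  have hnorms : ∀ i i' j j',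
      (1 - η * μ / (4 * d) + 12 * R' ^ 2 * η * τ / (n * d)) * ∑ k, (x₀ k - x k) ^ 2
        - ∑ k, (u i i' j j' k - x k) ^ 2
        - (1 / 2 - 8 * η * τ * R' ^ 2 / n) * ∑ k, (x₀ k - Function.update x₀ j (p i' j) k) ^ 2 =
      (12 * R' ^ 2 * η * τ / (n * d) - η * μ / (4 * d)) * ∑ k, (x₀ k - x k) ^ 2
        + (x₀ j - x j) ^ 2 - (u i i' j j' j - x j) ^ 2
        - (1 / 2 - 8 * η * τ * R' ^ 2 / n) * (x₀ j - p i' j) ^ 2 := by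
    intro i i' j j'
    rw [sum_sq_sub_of_eq_off (hu i i' j j').1, sum_sq_sub_update]
    ring
  have hcoord : 𝔼 j : Fin d, (x₀ j - x j) ^ 2 = (∑ k, (x₀ k - x k) ^ 2) / d := by
    rw [Fintype.expect_eq_sum_div_card, Fintype.card_fin]
  have hvar := expect_dual_estimator_sq_le a hR' x₀ x xs p
  have h2η : 0 < 2 * η := by positivity
  rw [one_div_mul_eq_div, div_add' _ _ _ h2η.ne', div_add' _ _ _ h2η.ne', le_div_iff₀ h2η]
  simp only [hnorms, expect_add_distrib, expect_sub_distrib, ← mul_expect, ← expect_div,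
    Fintype.expect_const, hcoord] at hsum ⊢
  linear_combination hsum + 2 * η * τ * hvar

/-- The dual block is the primal block of the transposed problem, with `φsᵢ / d` in place of
`g_j` and the sign of the gradient estimate reversed. -/
theorem expect_dual_step_le (a : Fin n → Fin d → ℝ) {R : ℝ} (hR : ∀ i, ∑ j, a i j ^ 2 ≤ R ^ 2)
    {S : Fin n → Set ℝ} {φs : Fin n → ℝ → ℝ} {γ η τ : ℝ}
    (hφ : ∀ i, ConvexOn ℝ (S i) fun z => φs i z - γ / 2 * z ^ 2) (hγ : 0 ≤ γ) (hτ : 0 < τ)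
    (hη : 0 ≤ η) (hτγ : τ * γ / d ≤ 1) (y₀ y ys : Fin n → ℝ) (hy : ∀ i, y i ∈ S i)
    (q H' : Fin d → Fin n → ℝ)
    (hq : ∀ j' i, q j' i ∈ S i ∧ ∀ z ∈ S i,
      τ / d * φs i (q j' i) + (q j' i - (y₀ i + τ * H' j' i)) ^ 2 / 2 ≤
        τ / d * φs i z + (z - (y₀ i + τ * H' j' i)) ^ 2 / 2)
    (v : Fin n → Fin n → Fin d → Fin d → Fin n → ℝ) (H : Fin n → Fin n → Fin d → Fin d → ℝ)
    (hv : ∀ i i' j j', (∀ k, k ≠ i → v i i' j j' k = y₀ k) ∧ v i i' j j' i ∈ S i ∧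
      ∀ z ∈ S i,
        τ / d * φs i (v i i' j j' i) + (v i i' j j' i - (y₀ i + τ * H i i' j j')) ^ 2 / 2 ≤
          τ / d * φs i z + (z - (y₀ i + τ * H i i' j j')) ^ 2 / 2) :
    𝔼 i, 𝔼 i', 𝔼 j, 𝔼 j',
          (1 / d * φs i (q j' i) - 1 / d * φs i (y i) + -H i i' j j' * (q j' i - y i)) +
        η * 𝔼 i, 𝔼 i', 𝔼 j, 𝔼 j', (a i j * (q j' i - ys i) - a i' j * (y₀ i' - ys i')) ^ 2 ≤
      1 / (2 * τ) * 𝔼 i, 𝔼 i', 𝔼 j, 𝔼 j',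
          ((1 - τ * γ / (4 * n * d) + 12 * R ^ 2 * η * τ / (n * d)) * ∑ k, (y₀ k - y k) ^ 2
            - ∑ k, (v i i' j j' k - y k) ^ 2
            - (1 / 2 - 8 * η * τ * R ^ 2 / d) *
                ∑ k, (y₀ k - Function.update y₀ i (q j' i) k) ^ 2)
        + 4 * η * R ^ 2 / (n * d) * ∑ k, (ys k - y k) ^ 2
        + τ * 𝔼 i, 𝔼 i', 𝔼 j, 𝔼 j', (H i i' j j' - H' j' i) ^ 2 := by
  have hstep := expect_primal_step_le (fun j i => a i j) hR
    (fun i => (hφ i).const_mul_sub_sq (by positivity : (0 : ℝ) ≤ 1 / d)) (by positivity) hτ hη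
    (by linear_combination hτγ) y₀ y ys hy q (fun j' i => -H' j' i)
    (fun j' i => ⟨(hq j' i).1, fun z hz => by linear_combination (hq j' i).2 z hz⟩)
    (fun j j' i i' => v i i' j j') (fun j j' i i' => -H i i' j j')
    (fun j j' i i' => ⟨(hv i i' j j').1, (hv i i' j j').2.1,
      fun z hz => by linear_combination (hv i i' j j').2.2 z hz⟩)
  have hsq : ∀ s t : ℝ, (-s - -t) ^ 2 = (s - t) ^ 2 := fun s t => by ring
  simp only [expect_comm_pairs (α := Fin d) (β := Fin d) (γ := Fin n) (δ := Fin n), hsq]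
    at hstep
  rw [show 1 - τ * (1 / d * γ) / (4 * n) + 12 * R ^ 2 * τ * η / (d * n) =
      1 - τ * γ / (4 * n * d) + 12 * R ^ 2 * η * τ / (n * d) by ring,
    show 8 * τ * η * R ^ 2 / d = 8 * η * τ * R ^ 2 / d by ring,
    show 4 * η * R ^ 2 / (d * n) = 4 * η * R ^ 2 / (n * d) by ring] at hstep
  exact hstep

theorem expect_expect_gap_estimator_eq (a : Fin n → Fin d → ℝ) (g : Fin d → ℝ → ℝ)
    (h : Fin n → ℝ → ℝ) (F : (Fin d → ℝ) → (Fin n → ℝ) → ℝ)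
    (hF : ∀ x y, F x y = (1 / (n : ℝ)) * (∑ i, y i * ∑ j, a i j * x j)
        - (1 / (n : ℝ)) * (∑ i, h i (y i)) + ∑ j, g j (x j))
    (xs : Fin d → ℝ) (ys : Fin n → ℝ) (Gx : Fin d → ℝ) (hGx : ∀ j, Gx j = (∑ i, a i j * ys i) / n)
    (Gy : Fin n → ℝ) (hGy : ∀ i, Gy i = (∑ j, a i j * xs j) / d)
    (x X : Fin d → ℝ) (y Y : Fin n → ℝ) :
    𝔼 i, 𝔼 j, ((g j (X j) - g j (x j) + (a i j * (Y i - ys i) + Gx j) * (X j - x j)) +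
        (1 / d * h i (Y i) - 1 / d * h i (y i) + -(a i j * (X j - xs j) + Gy i) * (Y i - y i))) =
      1 / d * (F X y - F x Y) := by
  have hprimal : ∑ i, ∑ j, (a i j * (Y i - ys i) + Gx j) * (X j - x j) =
      ∑ i, ∑ j, a i j * Y i * (X j - x j) := by
    rw [sum_comm, sum_comm (f := fun i j => a i j * Y i * (X j - x j))]
    refine sum_congr rfl fun j _ => ?_
    rw [← sum_mul, ← sum_mul, sum_mul_sub_add_mean_eq _ _ _ (by simp [hGx j])]
  have hdual : ∑ i, ∑ j, (a i j * (X j - xs j) + Gy i) * (Y i - y i) =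
      ∑ i, ∑ j, a i j * X j * (Y i - y i) := by
    refine sum_congr rfl fun i _ => ?_
    rw [← sum_mul, ← sum_mul, sum_mul_sub_add_mean_eq _ _ _ (by simp [hGy i])]
  calc _ = (∑ i, ∑ j, (g j (X j) - g j (x j) + (h i (Y i) - h i (y i)) / d)
            + ∑ i, ∑ j, (a i j * (Y i - ys i) + Gx j) * (X j - x j)
            - ∑ i, ∑ j, (a i j * (X j - xs j) + Gy i) * (Y i - y i)) / (n * d) := by
        simp only [Fintype.expect_eq_sum_div_card, Fintype.card_fin, ← sum_div, div_div,
          ← sum_add_distrib, ← sum_sub_distrib]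
        rw [mul_comm (d : ℝ)]
        congr 1
        exact sum_congr rfl fun i _ => sum_congr rfl fun j _ => by ring
    _ = (∑ i, ∑ j, ((g j (X j) - g j (x j) + (h i (Y i) - h i (y i)) / d)
            + (y i * (a i j * X j) - Y i * (a i j * x j)))) / (n * d) := by
        rw [hprimal, hdual]
        simp only [← sum_add_distrib, ← sum_sub_distrib]
        congr 1
        exact sum_congr rfl fun i _ => sum_congr rfl fun j _ => by ring
    _ = _ := by
        have hn : (n : ℝ) ≠ 0 := NeZero.ne _
        have hd : (d : ℝ) ≠ 0 := NeZero.ne _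
        rw [hF, hF]
        simp only [sum_add_distrib, sum_sub_distrib, sum_const, card_univ, Fintype.card_fin,
          nsmul_eq_mul, ← mul_sum, ← sum_div]
        field_simp
        ring

theorem expect_gap_estimator_eq (a : Fin n → Fin d → ℝ) (g : Fin d → ℝ → ℝ)
    (h : Fin n → ℝ → ℝ) (F : (Fin d → ℝ) → (Fin n → ℝ) → ℝ)
    (hF : ∀ x y, F x y = (1 / (n : ℝ)) * (∑ i, y i * ∑ j, a i j * x j)
        - (1 / (n : ℝ)) * (∑ i, h i (y i)) + ∑ j, g j (x j))
    (xs : Fin d → ℝ) (ys : Fin n → ℝ) (Gx : Fin d → ℝ) (hGx : ∀ j, Gx j = (∑ i, a i j * ys i) / n)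
    (Gy : Fin n → ℝ) (hGy : ∀ i, Gy i = (∑ j, a i j * xs j) / d)
    (x : Fin d → ℝ) (y : Fin n → ℝ) (x' : Fin n → Fin d → ℝ) (y' : Fin d → Fin n → ℝ) :
    𝔼 i, 𝔼 i', 𝔼 j, 𝔼 j',
        (g j (x' i' j) - g j (x j) + (a i j * (y' j' i - ys i) + Gx j) * (x' i' j - x j)) +
      𝔼 i, 𝔼 i', 𝔼 j, 𝔼 j', (1 / d * h i (y' j' i) - 1 / d * h i (y i) +
        -(a i j * (x' i' j - xs j) + Gy i) * (y' j' i - y i)) =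
      1 / d * 𝔼 _i : Fin n, 𝔼 i', 𝔼 _j : Fin d, 𝔼 j', (F (x' i') y - F x (y' j')) := by
  simp only [← expect_add_distrib]
  rw [expect_interleave]
  simp only [expect_expect_gap_estimator_eq a g h F hF xs ys Gx hGx Gy hGy, ← mul_expect,
    Fintype.expect_const]

end SPD1VR

theorem stmt_8_general (n d : ℕ) (hn : 0 < n) (hd : 0 < d)
    (a : Fin n → Fin d → ℝ) (R R' μ γ : ℝ) (hμ : 0 < μ) (hγ : 0 < γ)
    (hR : IsGreatest (Set.range fun i => Real.sqrt (∑ j, (a i j) ^ 2)) R)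
    (hR' : IsGreatest (Set.range fun j => Real.sqrt (∑ i, (a i j) ^ 2)) R')
    (Xs : Fin d → Set ℝ)
    (g : Fin d → ℝ → ℝ)
    -- `g` is `μ`-strongly convex (coordinatewise, equivalently for separable `g`)
    (hgstrong : ∀ j, ConvexOn ℝ (Xs j) (fun z => g j z - μ / 2 * z ^ 2))
    (φ : Fin n → ℝ → ℝ)
    -- each `φ_i*` is `γ`-strongly convex on its domain
    (hφstarstrong : ∀ i, ConvexOn ℝ (Ydom (φ i))
      (fun z => phiStar (φ i) z - γ / 2 * z ^ 2))
    (XX : Set (Fin d → ℝ)) (hXX : XX = {x | ∀ j, x j ∈ Xs j})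
    (YY : Set (Fin n → ℝ)) (hYY : YY = {y | ∀ i, y i ∈ Ydom (φ i)})
    (F : (Fin d → ℝ) → (Fin n → ℝ) → ℝ)
    (hF : ∀ x y, F x y = (1 / (n : ℝ)) * (∑ i, y i * ∑ j, a i j * x j)
        - (1 / (n : ℝ)) * (∑ i, phiStar (φ i) (y i)) + ∑ j, g j (x j))
    -- step sizes
    (η τ : ℝ) (hη : 0 < η) (hτ : 0 < τ)
    (hημ : η * μ ≤ 1) (hτγ : τ * γ / (d : ℝ) ≤ 1)
    -- current iterates and snapshots
    (xt : Fin d → ℝ) (yt : Fin n → ℝ)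
    (xtil : Fin d → ℝ) (ytil : Fin n → ℝ)
    -- full gradients at the snapshot
    (Gx : Fin d → ℝ) (hGx : ∀ j, Gx j = (∑ i, a i j * ytil i) / (n : ℝ))
    (Gy : Fin n → ℝ) (hGy : ∀ i, Gy i = (∑ j, a i j * xtil j) / (d : ℝ))
    -- imaginary full proximal iterates `x'^t` (given `i'`) and `y'^t` (given `j'`)
    (x' : Fin n → Fin d → ℝ) (y' : Fin d → Fin n → ℝ)
    (hx' : ∀ (i' : Fin n) (j : Fin d), x' i' j ∈ Xs j ∧
      ∀ z ∈ Xs j,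
        η * g j (x' i' j) +
            (x' i' j - (xt j - η * (a i' j * (yt i' - ytil i') + Gx j))) ^ 2 / 2 ≤
          η * g j z +
            (z - (xt j - η * (a i' j * (yt i' - ytil i') + Gx j))) ^ 2 / 2)
    (hy' : ∀ (j' : Fin d) (i : Fin n), y' j' i ∈ Ydom (φ i) ∧
      ∀ z ∈ Ydom (φ i),
        (τ / (d : ℝ)) * phiStar (φ i) (y' j' i) +
            (y' j' i - (yt i + τ * (a i j' * (xt j' - xtil j') + Gy i))) ^ 2 / 2 ≤
          (τ / (d : ℝ)) * phiStar (φ i) z +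
            (z - (yt i + τ * (a i j' * (xt j' - xtil j') + Gy i))) ^ 2 / 2)
    -- the extragradient iterates `x^{t+1}, y^{t+1}` for each sampled quadruple
    (xN : Fin n → Fin n → Fin d → Fin d → Fin d → ℝ)
    (yN : Fin n → Fin n → Fin d → Fin d → Fin n → ℝ)
    (hxN : ∀ (i i' : Fin n) (j j' : Fin d),
      (∀ k, k ≠ j → xN i i' j j' k = xt k) ∧ xN i i' j j' j ∈ Xs j ∧
      ∀ z ∈ Xs j,
        η * g j (xN i i' j j' j) +
            (xN i i' j j' j -
              (xt j - η * (a i j * (y' j' i - ytil i) + Gx j))) ^ 2 / 2 ≤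
          η * g j z +
            (z - (xt j - η * (a i j * (y' j' i - ytil i) + Gx j))) ^ 2 / 2)
    (hyN : ∀ (i i' : Fin n) (j j' : Fin d),
      (∀ k, k ≠ i → yN i i' j j' k = yt k) ∧ yN i i' j j' i ∈ Ydom (φ i) ∧
      ∀ z ∈ Ydom (φ i),
        (τ / (d : ℝ)) * phiStar (φ i) (yN i i' j j' i) +
            (yN i i' j j' i -
              (yt i + τ * (a i j * (x' i' j - xtil j) + Gy i))) ^ 2 / 2 ≤
          (τ / (d : ℝ)) * phiStar (φ i) z +
            (z - (yt i + τ * (a i j * (x' i' j - xtil j) + Gy i))) ^ 2 / 2) :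
    ∀ x ∈ XX, ∀ y ∈ YY,
      (1 / (d : ℝ)) *
          ((∑ i : Fin n, ∑ i' : Fin n, ∑ j : Fin d, ∑ j' : Fin d,
              (F (x' i') y - F x (y' j'))) / ((n : ℝ) ^ 2 * (d : ℝ) ^ 2))
        - 4 * η * R ^ 2 / ((n : ℝ) * (d : ℝ)) * (∑ k, (ytil k - y k) ^ 2)
        - 4 * τ * R' ^ 2 / ((n : ℝ) * (d : ℝ)) * (∑ k, (xtil k - x k) ^ 2)
      ≤ (1 / (2 * η)) *
          ((∑ i : Fin n, ∑ i' : Fin n, ∑ j : Fin d, ∑ j' : Fin d,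
              ((1 - η * μ / (4 * (d : ℝ)) + 12 * R' ^ 2 * η * τ / ((n : ℝ) * (d : ℝ)))
                  * (∑ k, (xt k - x k) ^ 2)
                - (∑ k, (xN i i' j j' k - x k) ^ 2)
                - (1 / 2 - 8 * η * τ * R' ^ 2 / (n : ℝ))
                  * (∑ k, (xt k - Function.update xt j (x' i' j) k) ^ 2))) /
            ((n : ℝ) ^ 2 * (d : ℝ) ^ 2))
        + (1 / (2 * τ)) *
          ((∑ i : Fin n, ∑ i' : Fin n, ∑ j : Fin d, ∑ j' : Fin d,
              ((1 - τ * γ / (4 * (n : ℝ) * (d : ℝ)) + 12 * R ^ 2 * η * τ / ((n : ℝ) * (d : ℝ)))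
                  * (∑ k, (yt k - y k) ^ 2)
                - (∑ k, (yN i i' j j' k - y k) ^ 2)
                - (1 / 2 - 8 * η * τ * R ^ 2 / (d : ℝ))
                  * (∑ k, (yt k - Function.update yt i (y' j' i) k) ^ 2))) /
            ((n : ℝ) ^ 2 * (d : ℝ) ^ 2)) := by
  have : NeZero n := ⟨hn.ne'⟩
  have : NeZero d := ⟨hd.ne'⟩
  have hrow : ∀ i, ∑ j, a i j ^ 2 ≤ R ^ 2 := fun i => (Real.sqrt_le_iff.1 (hR.2 ⟨i, rfl⟩)).2
  have hcol : ∀ j, ∑ i, a i j ^ 2 ≤ R' ^ 2 := fun j => (Real.sqrt_le_iff.1 (hR'.2 ⟨j, rfl⟩)).2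
  intro x hx y hy
  rw [hXX] at hx
  rw [hYY] at hy
  have hprimal := SPD1VR.expect_primal_step_le a hcol hgstrong hμ.le hη hτ.le hημ xt x xtil hx
    x' _ hx' xN _ hxN
  have hdual := SPD1VR.expect_dual_step_le a hrow hφstarstrong hγ.le hτ hη.le hτγ yt y ytil hy
    y' _ hy' yN _ hyN
  have hgap := SPD1VR.expect_gap_estimator_eq a g (fun i => phiStar (φ i)) F hF xtil ytil
    Gx hGx Gy hGy x y x' y'
  simp only [add_sub_add_right_eq_sub] at hprimal hdual
  simp only [sum_sum_sum_sum_div_eq_expect]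
  linarith

/-- Lemma 5 (one-step inequality for SPD1-VR).  One inner iteration at outer stage
`k`, conditioned on the past: `x^t, y^t` and snapshots `x̃, ỹ` are fixed,
`(i, i', j, j')` is sampled uniformly; `x' i'` and `y' j'` are the full "imaginary"
proximal iterates, `x̄ = Function.update x^t j (x' i' j)`,
`ȳ = Function.update y^t i (y' j' i)`, and `xN i i' j j'`, `yN i i' j j'` are the
extragradient iterates `x^{t+1}, y^{t+1}`.  Conditional expectation is the average
over the `n²d²` index quadruples. -/
theorem stmt_8 (n d : ℕ) (hn : 0 < n) (hd : 0 < d)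
    (a : Fin n → Fin d → ℝ) (R R' μ γ : ℝ) (hμ : 0 < μ) (hγ : 0 < γ)
    (hR : IsGreatest (Set.range fun i => Real.sqrt (∑ j, (a i j) ^ 2)) R)
    (hR' : IsGreatest (Set.range fun j => Real.sqrt (∑ i, (a i j) ^ 2)) R')
    (Xs : Fin d → Set ℝ) (hXconv : ∀ j, Convex ℝ (Xs j)) (hXcl : ∀ j, IsClosed (Xs j))
    (g : Fin d → ℝ → ℝ) (hgconv : ∀ j, ConvexOn ℝ (Xs j) (g j))
    (hglsc : ∀ j, LowerSemicontinuousOn (g j) (Xs j))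
    -- `g` is `μ`-strongly convex (coordinatewise, equivalently for separable `g`)
    (hgstrong : ∀ j, ConvexOn ℝ (Xs j) (fun z => g j z - μ / 2 * z ^ 2))
    (φ : Fin n → ℝ → ℝ) (hφconv : ∀ i, ConvexOn ℝ Set.univ (φ i))
    -- each `φ_i*` is `γ`-strongly convex on its domain
    (hφstarstrong : ∀ i, ConvexOn ℝ (Ydom (φ i))
      (fun z => phiStar (φ i) z - γ / 2 * z ^ 2))
    (XX : Set (Fin d → ℝ)) (hXX : XX = {x | ∀ j, x j ∈ Xs j})
    (YY : Set (Fin n → ℝ)) (hYY : YY = {y | ∀ i, y i ∈ Ydom (φ i)})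
    (F : (Fin d → ℝ) → (Fin n → ℝ) → ℝ)
    (hF : ∀ x y, F x y = (1 / (n : ℝ)) * (∑ i, y i * ∑ j, a i j * x j)
        - (1 / (n : ℝ)) * (∑ i, phiStar (φ i) (y i)) + ∑ j, g j (x j))
    -- step sizes
    (η τ : ℝ) (hη : 0 < η) (hτ : 0 < τ)
    (hημ : η * μ ≤ 1) (hτγ : τ * γ / (d : ℝ) ≤ 1)
    -- current iterates and snapshots
    (xt : Fin d → ℝ) (hxt : xt ∈ XX) (yt : Fin n → ℝ) (hyt : yt ∈ YY)
    (xtil : Fin d → ℝ) (hxtil : xtil ∈ XX) (ytil : Fin n → ℝ) (hytil : ytil ∈ YY)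
    -- full gradients at the snapshot
    (Gx : Fin d → ℝ) (hGx : ∀ j, Gx j = (∑ i, a i j * ytil i) / (n : ℝ))
    (Gy : Fin n → ℝ) (hGy : ∀ i, Gy i = (∑ j, a i j * xtil j) / (d : ℝ))
    -- imaginary full proximal iterates `x'^t` (given `i'`) and `y'^t` (given `j'`)
    (x' : Fin n → Fin d → ℝ) (y' : Fin d → Fin n → ℝ)
    (hx' : ∀ (i' : Fin n) (j : Fin d), x' i' j ∈ Xs j ∧
      ∀ z ∈ Xs j,
        η * g j (x' i' j) +
            (x' i' j - (xt j - η * (a i' j * (yt i' - ytil i') + Gx j))) ^ 2 / 2 ≤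
          η * g j z +
            (z - (xt j - η * (a i' j * (yt i' - ytil i') + Gx j))) ^ 2 / 2)
    (hy' : ∀ (j' : Fin d) (i : Fin n), y' j' i ∈ Ydom (φ i) ∧
      ∀ z ∈ Ydom (φ i),
        (τ / (d : ℝ)) * phiStar (φ i) (y' j' i) +
            (y' j' i - (yt i + τ * (a i j' * (xt j' - xtil j') + Gy i))) ^ 2 / 2 ≤
          (τ / (d : ℝ)) * phiStar (φ i) z +
            (z - (yt i + τ * (a i j' * (xt j' - xtil j') + Gy i))) ^ 2 / 2)
    -- the extragradient iterates `x^{t+1}, y^{t+1}` for each sampled quadruple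
    (xN : Fin n → Fin n → Fin d → Fin d → Fin d → ℝ)
    (yN : Fin n → Fin n → Fin d → Fin d → Fin n → ℝ)
    (hxN : ∀ (i i' : Fin n) (j j' : Fin d),
      (∀ k, k ≠ j → xN i i' j j' k = xt k) ∧ xN i i' j j' j ∈ Xs j ∧
      ∀ z ∈ Xs j,
        η * g j (xN i i' j j' j) +
            (xN i i' j j' j -
              (xt j - η * (a i j * (y' j' i - ytil i) + Gx j))) ^ 2 / 2 ≤
          η * g j z +
            (z - (xt j - η * (a i j * (y' j' i - ytil i) + Gx j))) ^ 2 / 2)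
    (hyN : ∀ (i i' : Fin n) (j j' : Fin d),
      (∀ k, k ≠ i → yN i i' j j' k = yt k) ∧ yN i i' j j' i ∈ Ydom (φ i) ∧
      ∀ z ∈ Ydom (φ i),
        (τ / (d : ℝ)) * phiStar (φ i) (yN i i' j j' i) +
            (yN i i' j j' i -
              (yt i + τ * (a i j * (x' i' j - xtil j) + Gy i))) ^ 2 / 2 ≤
          (τ / (d : ℝ)) * phiStar (φ i) z +
            (z - (yt i + τ * (a i j * (x' i' j - xtil j) + Gy i))) ^ 2 / 2) :
    ∀ x ∈ XX, ∀ y ∈ YY,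
      (1 / (d : ℝ)) *
          ((∑ i : Fin n, ∑ i' : Fin n, ∑ j : Fin d, ∑ j' : Fin d,
              (F (x' i') y - F x (y' j'))) / ((n : ℝ) ^ 2 * (d : ℝ) ^ 2))
        - 4 * η * R ^ 2 / ((n : ℝ) * (d : ℝ)) * (∑ k, (ytil k - y k) ^ 2)
        - 4 * τ * R' ^ 2 / ((n : ℝ) * (d : ℝ)) * (∑ k, (xtil k - x k) ^ 2)
      ≤ (1 / (2 * η)) *
          ((∑ i : Fin n, ∑ i' : Fin n, ∑ j : Fin d, ∑ j' : Fin d,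
              ((1 - η * μ / (4 * (d : ℝ)) + 12 * R' ^ 2 * η * τ / ((n : ℝ) * (d : ℝ)))
                  * (∑ k, (xt k - x k) ^ 2)
                - (∑ k, (xN i i' j j' k - x k) ^ 2)
                - (1 / 2 - 8 * η * τ * R' ^ 2 / (n : ℝ))
                  * (∑ k, (xt k - Function.update xt j (x' i' j) k) ^ 2))) /
            ((n : ℝ) ^ 2 * (d : ℝ) ^ 2))
        + (1 / (2 * τ)) *
          ((∑ i : Fin n, ∑ i' : Fin n, ∑ j : Fin d, ∑ j' : Fin d,
              ((1 - τ * γ / (4 * (n : ℝ) * (d : ℝ)) + 12 * R ^ 2 * η * τ / ((n : ℝ) * (d : ℝ)))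
                  * (∑ k, (yt k - y k) ^ 2)
                - (∑ k, (yN i i' j j' k - y k) ^ 2)
                - (1 / 2 - 8 * η * τ * R ^ 2 / (d : ℝ))
                  * (∑ k, (yt k - Function.update yt i (y' j' i) k) ^ 2))) /
            ((n : ℝ) ^ 2 * (d : ℝ) ^ 2)) :=
  stmt_8_general n d hn hd a R R' μ γ hμ hγ hR hR' Xs g hgstrong φ hφstarstrong XX hXX YY hYY F hF η
    τ hη hτ hημ hτγ xt yt xtil ytil Gx hGx Gy hGy x' y' hx' hy' xN yN hxN hyN
end

section
/- (Deterministic proximal descent inequality) Let X_j ⊆ ℝ be convex and closed, g_j : X_j → ℝ convex, closed and μ-strongly convex (μ ≥ 0), η > 0, a ∈ ℝ, and w ∈ ℝ with |w| ≤ L. Let u ∈ X_j and u' = prox_{η g_j}(u − η·a·w), the proximal step taken over X_j. Then for every x_j ∈ X_j: (1/(2η))·[(1 − min{ημ/2, 1/4})(u − x_j)² − (u' − x_j)²] ≥ a·w·(u − x_j) + g_j(u') − g_j(x_j) − η·L²·a². -/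
/-!
Write `v = u - η a w`. The prox objective `z ↦ η g z + (z - v)² / 2` is `(1 + ημ)`-strongly
convex and minimised over `X_j` at `u'`, so it exceeds its minimum at `x_j` by at least
`(1 + ημ)/2 · (x_j - u')²`. Expanding the squares leaves the cross term `2ηaw(u - u')`,
which Young's inequality and `|w| ≤ L` bound by `2η²L²a² + (u - u')²/2`; the lost
`min{ημ/2, 1/4} (u - x_j)²` is then paid for by `(u - u')²/2 + ημ (x_j - u')²`.
-/

open Filter Topology

variable {E : Type*} [NormedAddCommGroup E]

lemma StrongConvexOn.add_sq_le_of_isMinOn [NormedSpace ℝ E] {s : Set E} {m : ℝ} {f : E → ℝ}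
    {x y : E} (hf : StrongConvexOn s m f) (hmin : IsMinOn f s y) (hy : y ∈ s) (hx : x ∈ s) :
    f y + m / 2 * ‖x - y‖ ^ 2 ≤ f x := by
  have hseg : ∀ t ∈ Set.Ioc (0 : ℝ) 1, (1 - t) * (m / 2 * ‖x - y‖ ^ 2) ≤ f x - f y := by
    rintro t ⟨ht0, ht1⟩
    have hconv := hf.2 hx hy ht0.le (sub_nonneg.2 ht1) (add_sub_cancel t 1)
    have hmin_t : f y ≤ f (t • x + (1 - t) • y) :=
      hmin (hf.1 hx hy ht0.le (sub_nonneg.2 ht1) (add_sub_cancel t 1))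
    rw [smul_eq_mul, smul_eq_mul] at hconv
    refine le_of_mul_le_mul_left ?_ ht0
    linarith
  have hlim : Tendsto (fun t : ℝ => (1 - t) * (m / 2 * ‖x - y‖ ^ 2)) (𝓝[>] 0)
      (𝓝 ((1 - 0) * (m / 2 * ‖x - y‖ ^ 2))) :=
    ((continuous_const.sub continuous_id).mul continuous_const).tendsto 0 |>.mono_left
      nhdsWithin_le_nhds
  have := le_of_tendsto hlim (eventually_of_mem (Ioc_mem_nhdsGT one_pos) hseg)
  linarith

lemma StrongConvexOn.const_mul_add_half_norm_sub_sq [InnerProductSpace ℝ E] {s : Set E} {m η : ℝ} {f : E → ℝ}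
    (hf : StrongConvexOn s m f) (hη : 0 ≤ η) (v : E) :
    StrongConvexOn s (η * m + 1) (fun z => η * f z + ‖z - v‖ ^ 2 / 2) := by
  rw [strongConvexOn_iff_convex] at hf ⊢
  have hsplit : (fun z => η * f z + ‖z - v‖ ^ 2 / 2 - (η * m + 1) / 2 * ‖z‖ ^ 2) =
      fun z => η • (f z - m / 2 * ‖z‖ ^ 2) + (-innerₗ E v z + ‖v‖ ^ 2 / 2) := by
    funext z
    rw [norm_sub_sq_real, innerₗ_apply_apply, real_inner_comm, smul_eq_mul]
    ring
  rw [hsplit]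
  exact (hf.smul hη).add ((LinearMap.convexOn (-innerₗ E v) hf.1).add_const _)

lemma descent_bound_of_quadratic_growth {η μ a w L u u' x gu' gx : ℝ} (hη : 0 < η) (hμ : 0 ≤ μ) (hw : |w| ≤ L)
    (h : η * gu' + (u' - (u - η * (a * w))) ^ 2 / 2 + (η * μ + 1) / 2 * (x - u') ^ 2
      ≤ η * gx + (x - (u - η * (a * w))) ^ 2 / 2) :
    a * w * (u - x) + gu' - gx - η * L ^ 2 * a ^ 2 ≤
      (1 / (2 * η)) * ((1 - min (η * μ / 2) (1 / 4)) * (u - x) ^ 2 - (u' - x) ^ 2) := by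
  set c := min (η * μ / 2) (1 / 4)
  have hc : c * (u - x) ^ 2 ≤ (u - u') ^ 2 / 2 + η * μ * (x - u') ^ 2 := by
    have hc0 : 0 ≤ c := le_min (by positivity) (by norm_num)
    have hsplit : (u - x) ^ 2 ≤ 2 * (u - u') ^ 2 + 2 * (x - u') ^ 2 := by
      nlinarith [sq_nonneg (u + x - 2 * u')]
    nlinarith [min_le_left (η * μ / 2) (1 / 4), min_le_right (η * μ / 2) (1 / 4),
      sq_nonneg (u - u'), sq_nonneg (x - u')]
  have hyoung : 2 * η * (a * w) * (u - u') ≤ 2 * η ^ 2 * L ^ 2 * a ^ 2 + (u - u') ^ 2 / 2 := by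
    have hw2 : w ^ 2 ≤ L ^ 2 := sq_le_sq' (neg_le_of_abs_le hw) (le_of_abs_le hw)
    nlinarith [sq_nonneg (2 * η * (a * w) - (u - u')),
      mul_le_mul_of_nonneg_left hw2 (by positivity : 0 ≤ η ^ 2 * a ^ 2)]
  rw [one_div, inv_mul_eq_div, le_div_iff₀ (by positivity)]
  linarith

theorem stmt_9_general (Xj : Set ℝ) (gj : ℝ → ℝ) (μ : ℝ) (hμ : 0 ≤ μ)
    (hstrong : ConvexOn ℝ Xj (fun z => gj z - μ / 2 * z ^ 2))
    (η : ℝ) (hη : 0 < η) (a w L : ℝ) (hw : |w| ≤ L)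
    (u : ℝ) (u' : ℝ) (hu' : u' ∈ Xj)
    (hprox : ∀ z ∈ Xj,
      η * gj u' + (u' - (u - η * (a * w))) ^ 2 / 2
        ≤ η * gj z + (z - (u - η * (a * w))) ^ 2 / 2) :
    ∀ xj ∈ Xj,
      a * w * (u - xj) + gj u' - gj xj - η * L ^ 2 * a ^ 2 ≤
        (1 / (2 * η)) * ((1 - min (η * μ / 2) (1 / 4)) * (u - xj) ^ 2 - (u' - xj) ^ 2) := by
  intro x hx
  have hsc : StrongConvexOn Xj μ gj :=
    strongConvexOn_iff_convex.2 (by simpa only [Real.norm_eq_abs, sq_abs] using hstrong)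
  have hmin : IsMinOn (fun z => η * gj z + ‖z - (u - η * (a * w))‖ ^ 2 / 2) Xj u' :=
    isMinOn_iff.2 fun z hz => by simpa only [Real.norm_eq_abs, sq_abs] using hprox z hz
  have hgap := (hsc.const_mul_add_half_norm_sub_sq hη.le _).add_sq_le_of_isMinOn hmin hu' hx
  simp only [Real.norm_eq_abs, sq_abs] at hgap
  exact descent_bound_of_quadratic_growth hη hμ hw (by linarith)

/-- Deterministic proximal descent inequality: for `X_j ⊆ ℝ` convex closed,
`g_j` convex, closed and `μ`-strongly convex (`μ ≥ 0`), `η > 0`, `|w| ≤ L`, `u ∈ X_j`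
and `u' = prox_{η g_j}(u − η·a·w)` (taken over `X_j`), every `x_j ∈ X_j` satisfies
`(1/(2η))[(1 − min{ημ/2, 1/4})(u − x_j)² − (u' − x_j)²]
  ≥ a·w·(u − x_j) + g_j(u') − g_j(x_j) − η·L²·a²`. -/
theorem stmt_9 (Xj : Set ℝ) (hXjconv : Convex ℝ Xj) (hXjcl : IsClosed Xj)
    (gj : ℝ → ℝ) (hgconv : ConvexOn ℝ Xj gj) (hglsc : LowerSemicontinuousOn gj Xj)
    (μ : ℝ) (hμ : 0 ≤ μ)
    (hstrong : ConvexOn ℝ Xj (fun z => gj z - μ / 2 * z ^ 2))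
    (η : ℝ) (hη : 0 < η) (a w L : ℝ) (hw : |w| ≤ L)
    (u : ℝ) (hu : u ∈ Xj) (u' : ℝ) (hu' : u' ∈ Xj)
    (hprox : ∀ z ∈ Xj,
      η * gj u' + (u' - (u - η * (a * w))) ^ 2 / 2
        ≤ η * gj z + (z - (u - η * (a * w))) ^ 2 / 2) :
    ∀ xj ∈ Xj,
      a * w * (u - xj) + gj u' - gj xj - η * L ^ 2 * a ^ 2 ≤
        (1 / (2 * η)) * ((1 - min (η * μ / 2) (1 / 4)) * (u - xj) ^ 2 - (u' - xj) ^ 2) :=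
  stmt_9_general Xj gj μ hμ hstrong η hη a w L hw u u' hu' hprox
end
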